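/- arXiv:2505.02452 — 3 statements merged into one kernel-verified Lean document; each statement's English description precedes it below -/
import Mathlib

section
/- Let C be a code of length n over alphabet F_q, let ρ ∈ [0,1] with ρn an integer, and let y be a string over F_q. For each i ∈ [n], define S_i = { y_j : max(1, i - ρn) ≤ j ≤ min(|y|, i + ρn) }. Then every codeword c ∈ C with edit distance d_ed(c, y) ≤ ρn satisfies d_H(c, S) ≤ ρn, i.e., |{i ∈ [n] : c_i ∉ S_i}| ≤ ρn. -/
/-- The insertion/deletion edit distance between two lists: the minimal total
number of deletions plus insertions needed to turn `x` into `y`, expressed via a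
common subsequence. -/
noncomputable def editDist {α : Type*} (x y : List α) : ℕ :=
  sInf {d | ∃ z : List α, z.Sublist x ∧ z.Sublist y ∧
    d = (x.length - z.length) + (y.length - z.length)}

/-- A strictly monotone map between `Fin`s grows at least linearly. -/
lemma strictMono_add_le {m N : ℕ} (f : Fin m → Fin N) (hf : StrictMono f) :
    ∀ k : ℕ, ∀ a b : Fin m, (b : ℕ) = (a : ℕ) + k → (f a : ℕ) + k ≤ f b := by
  intro k
  induction k with
  | zero =>
    intro a b hab
    have : a = b := Fin.ext (by omega)
    simp [this]
  | succ k ih =>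
    intro a b hab
    have hk : (a : ℕ) + k < m := by omega
    set b' : Fin m := ⟨(a : ℕ) + k, hk⟩ with hb'
    have h1 : (f a : ℕ) + k ≤ f b' := ih a b' rfl
    have h2 : f b' < f b := hf (by simp [hb', Fin.lt_def]; omega)
    have := Fin.lt_def.mp h2
    omega

/-- Let `C` be a code of length `n` over `F`, `ρ ∈ [0,1]` with `ρn = t`
an integer, and `y` a string over `F`.  For each `i`, let
`S i = { y_j : i - t ≤ j ≤ i + t }` (indices clipped to the range of `y`).
Then every codeword `c ∈ C` with `d_ed(c, y) ≤ t` satisfies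
`|{i : c i ∉ S i}| ≤ t`. -/
theorem window_lists_cover {F : Type*} {n : ℕ} (ρ : ℝ) (hρ0 : 0 ≤ ρ) (hρ1 : ρ ≤ 1)
    (t : ℕ) (ht : (t : ℝ) = ρ * n)
    (C : Set (Fin n → F)) (c : Fin n → F) (hc : c ∈ C)
    (y : List F) (S : Fin n → Set F)
    (hS : ∀ i, S i = {v | ∃ j : Fin y.length,
      y.get j = v ∧ (i : ℤ) - t ≤ (j : ℤ) ∧ (j : ℤ) ≤ (i : ℤ) + t})
    (hed : editDist (List.ofFn c) y ≤ t) :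
    ({i : Fin n | c i ∉ S i}).ncard ≤ t := by
  classical
  set x := List.ofFn c with hx
  have hne : {d | ∃ z : List F, z.Sublist x ∧ z.Sublist y ∧
      d = (x.length - z.length) + (y.length - z.length)}.Nonempty :=
    ⟨x.length + y.length, [], List.nil_sublist _, List.nil_sublist _, by simp⟩
  have hmem := Nat.sInf_mem hne
  obtain ⟨z, hzx, hzy, hzd⟩ := hmem
  have hd : (x.length - z.length) + (y.length - z.length) ≤ t := by
    rw [← hzd]; exact hed
  have hxlen : x.length = n := by simp [hx]
  set m := z.length with hm
  have hmn : m ≤ n := by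
    have := hzx.length_le; omega
  have hmy : m ≤ y.length := hzy.length_le
  have hnm : n - m ≤ t := by omega
  have hym : y.length - m ≤ t := by omega
  obtain ⟨f, hf⟩ := List.sublist_iff_exists_fin_orderEmbedding_get_eq.mp hzx
  obtain ⟨g, hg⟩ := List.sublist_iff_exists_fin_orderEmbedding_get_eq.mp hzy
  -- the map from matched positions into Fin n
  set f' : Fin m → Fin n := fun k => Fin.cast hxlen (f k) with hf'
  have hf'inj : Function.Injective f' := by
    intro a b hab
    have hv := congrArg Fin.val hab
    exact f.injective (Fin.ext hv)
  -- bounds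
  have hfb : ∀ k : Fin m, (k : ℕ) ≤ (f k : ℕ) ∧ (f k : ℕ) + m ≤ n + (k : ℕ) := by
    intro k
    constructor
    · have h0 : (0 : ℕ) < m := lt_of_le_of_lt (Nat.zero_le _) k.is_lt
      have := strictMono_add_le f f.strictMono (k : ℕ) ⟨0, h0⟩ k (by simp)
      omega
    · have hkm := k.is_lt
      have hlast : m - 1 < m := by omega
      have := strictMono_add_le f f.strictMono (m - 1 - (k : ℕ)) k ⟨m - 1, hlast⟩
        (by have := k.is_lt; simp; omega)
      have hflt : (f ⟨m - 1, hlast⟩ : ℕ) < x.length := (f ⟨m - 1, hlast⟩).is_lt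
      omega
  have hgb : ∀ k : Fin m, (k : ℕ) ≤ (g k : ℕ) ∧ (g k : ℕ) + m ≤ y.length + (k : ℕ) := by
    intro k
    constructor
    · have h0 : (0 : ℕ) < m := lt_of_le_of_lt (Nat.zero_le _) k.is_lt
      have := strictMono_add_le g g.strictMono (k : ℕ) ⟨0, h0⟩ k (by simp)
      omega
    · have hkm := k.is_lt
      have hlast : m - 1 < m := by omega
      have := strictMono_add_le g g.strictMono (m - 1 - (k : ℕ)) k ⟨m - 1, hlast⟩
        (by have := k.is_lt; simp; omega)
      have hglt : (g ⟨m - 1, hlast⟩ : ℕ) < y.length := (g ⟨m - 1, hlast⟩).is_lt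
      omega
  -- matched positions are good
  have hgood : ∀ k : Fin m, c (f' k) ∈ S (f' k) := by
    intro k
    rw [hS]
    refine ⟨g k, ?_, ?_, ?_⟩
    · have h1 : z.get k = x.get (f k) := hf k
      have h2 : z.get k = y.get (g k) := hg k
      have h3 : x.get (f k) = c (f' k) := by
        simp [hx, hf', List.get_ofFn]
        rfl
      rw [← h2, h1, h3]
    · have h1 := (hfb k).2
      have h2 := (hgb k).1
      have : (f' k : ℕ) = (f k : ℕ) := rfl
      omega
    · have h1 := (hgb k).2
      have h2 := (hfb k).1
      have : (f' k : ℕ) = (f k : ℕ) := rfl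
      omega
  -- bad set is inside complement of range f'
  have hsub : {i : Fin n | c i ∉ S i} ⊆ (Set.range f')ᶜ := by
    intro i hi
    simp only [Set.mem_compl_iff, Set.mem_range]
    rintro ⟨k, rfl⟩
    exact hi (hgood k)
  calc ({i : Fin n | c i ∉ S i}).ncard
      ≤ ((Set.range f')ᶜ).ncard := Set.ncard_le_ncard hsub (Set.toFinite _)
    _ ≤ t := by
        have h1 : (Set.range f').ncard + ((Set.range f')ᶜ).ncard = n := by
          have := Set.ncard_add_ncard_compl (Set.range f')
          simpa using this
        have h2 : (Set.range f').ncard = m := by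
          rw [← Set.image_univ, Set.ncard_image_of_injective _ hf'inj, Set.ncard_univ]
          simp
        omega
end

section
/- If C ⊆ F_q^n is a (ρ, 2ρn+1, L)-list-recoverable code, then C is a (ρ, L)-list-decodable insdel code: for every string y over F_q, the number of codewords c ∈ C with d_ed(c, y) ≤ ρn is at most L. -/
/-- `C ⊆ F^n` is `(ρ, ℓ, L)`-list-recoverable: for every tuple of lists
`S_1,…,S_n ⊆ F` each of size at most `ℓ`, at most `L` codewords `c` satisfy
`|{i : c i ∉ S i}| ≤ ρn`. -/
def ListRecoverable {F : Type*} [DecidableEq F] {n : ℕ} (ρ : ℝ) (ℓ L : ℕ)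
    (C : Finset (Fin n → F)) : Prop :=
  ∀ S : Fin n → Finset F, (∀ i, (S i).card ≤ ℓ) →
    (C.filter (fun c =>
      ((Finset.univ.filter (fun i => c i ∉ S i)).card : ℝ) ≤ ρ * n)).card ≤ L


/-!
Let `S i` be the set of symbols of `y` at positions `i - t, …, i + t`, so `#(S i) ≤ 2t + 1`.
If `d_ed(c, y) ≤ t`, a longest common subsequence of `c` and `y` leaves at most `t` positions
of `c` unmatched, and pairs each matched position `i` of `c` with a position `j` of `y` at
shift `|i - j| ≤ t`, so `c i = y j ∈ S i`. Hence every such `c` disagrees with `S` in at most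
`t = ρn` positions, and list recovery bounds their number by `L`.
-/

open Finset

namespace Fin

variable {m k : ℕ}

lemma le_val_of_strictMono {f : Fin m → Fin k} (hf : StrictMono f) (i : Fin m) :
    (i : ℕ) ≤ f i := by
  obtain ⟨i, hi⟩ := i
  induction i with
  | zero => exact Nat.zero_le _
  | succ j ih =>
    have hstep : f ⟨j, by omega⟩ < f ⟨j + 1, hi⟩ := hf (by simp [Fin.lt_def])
    have := ih (by omega)
    simp only [Fin.lt_def] at hstep
    simp only at this ⊢
    omega

lemma val_le_add_of_strictMono {f : Fin m → Fin k} (hf : StrictMono f) (i : Fin m) :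
    (f i : ℕ) ≤ i + (k - m) := by
  have hrev : StrictMono fun j : Fin m => (f j.rev).rev :=
    fun a b hab => Fin.rev_lt_rev.mpr (hf (Fin.rev_lt_rev.mpr hab))
  have := le_val_of_strictMono hrev i.rev
  simp only [Fin.rev_rev, Fin.val_rev] at this
  have := (f i).isLt
  omega

end Fin

lemma exists_common_sublist_editDist {α : Type*} (x y : List α) :
    ∃ z : List α, z.Sublist x ∧ z.Sublist y ∧
      editDist x y = (x.length - z.length) + (y.length - z.length) :=
  Nat.sInf_mem (s := {d | ∃ z : List α, z.Sublist x ∧ z.Sublist y ∧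
    d = (x.length - z.length) + (y.length - z.length)})
    ⟨_, [], List.nil_sublist _, List.nil_sublist _, rfl⟩

section Window

variable {α : Type*} [DecidableEq α]

def window (y : List α) (t i : ℕ) : Finset α :=
  ((y.drop (i - t)).take (2 * t + 1)).toFinset

lemma card_window_le (y : List α) (t i : ℕ) : (window y t i).card ≤ 2 * t + 1 :=
  (List.toFinset_card_le _).trans (by simp [List.length_take])

lemma getElem_mem_window {y : List α} {t i j : ℕ} (hj : j < y.length) (hij : i ≤ j + t)
    (hji : j ≤ i + t) : y[j] ∈ window y t i := by
  have hlt : j - (i - t) < ((y.drop (i - t)).take (2 * t + 1)).length := by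
    simp only [List.length_take, List.length_drop]
    omega
  have hget : ((y.drop (i - t)).take (2 * t + 1))[j - (i - t)] = y[j] := by
    simp only [List.getElem_take, List.getElem_drop]
    congr 1
    omega
  rw [window, List.mem_toFinset, ← hget]
  exact List.getElem_mem hlt

lemma card_filter_not_mem_window_le_of_editDist_le {n t : ℕ} {c : Fin n → α} {y : List α}
    (hd : editDist (List.ofFn c) y ≤ t) : #{i : Fin n | c i ∉ window y t i} ≤ t := by
  obtain ⟨z, hzc, hzy, hdz⟩ := exists_common_sublist_editDist (List.ofFn c) y
  rw [List.length_ofFn] at hdz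
  obtain ⟨f, hf⟩ := List.sublist_iff_exists_fin_orderEmbedding_get_eq.mp hzc
  obtain ⟨g, hg⟩ := List.sublist_iff_exists_fin_orderEmbedding_get_eq.mp hzy
  set e : Fin z.length → Fin n := fun k => Fin.cast (List.length_ofFn) (f k)
  have he : StrictMono e := fun a b hab => f.strictMono hab
  have matched_mem_window (k : Fin z.length) : c (e k) ∈ window y t (e k) := by
    have hck : c (e k) = y[(g k : ℕ)] := by
      rw [← List.get_eq_getElem, ← hg k, hf k, List.get_ofFn]
    rw [hck]
    have := Fin.le_val_of_strictMono he k
    have := Fin.val_le_add_of_strictMono he k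
    have := Fin.le_val_of_strictMono g.strictMono k
    have := Fin.val_le_add_of_strictMono g.strictMono k
    exact getElem_mem_window _ (by omega) (by omega)
  calc #{i : Fin n | c i ∉ window y t i}
      ≤ #(univ.image e)ᶜ := by
        refine card_le_card fun i hi => ?_
        simp only [mem_filter, mem_compl, mem_image] at hi ⊢
        rintro ⟨k, -, rfl⟩
        exact hi.2 (matched_mem_window k)
    _ = n - z.length := by
        rw [card_compl, card_image_of_injective _ he.injective, card_univ, Fintype.card_fin,
          Fintype.card_fin]
    _ ≤ t := by omega

end Window

/-- If `C ⊆ F^n` is `(ρ, 2ρn+1, L)`-list-recoverable (with `t = ρn`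
an integer), then `C` is a `(ρ, L)`-list-decodable insdel code: for every string `y`
over `F`, at most `L` codewords `c ∈ C` satisfy `d_ed(c, y) ≤ ρn`. -/
theorem listRecoverable_implies_insdel_listDecodable
    {F : Type*} [DecidableEq F] {n t L : ℕ} (ρ : ℝ) (ht : (t : ℝ) = ρ * n)
    (C : Finset (Fin n → F)) (h : ListRecoverable ρ (2 * t + 1) L C)
    (y : List F) :
    (C.filter (fun c => editDist (List.ofFn c) y ≤ t)).card ≤ L := by
  refine (card_le_card fun c hc => ?_).trans (h (fun i => window y t i) fun i => card_window_le ..)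
  rw [mem_filter] at hc ⊢
  refine ⟨hc.1, ?_⟩
  rw [← ht]
  exact_mod_cast card_filter_not_mem_window_le_of_editDist_le hc.2
end

section
/- For a code C ⊆ F_q^n with relative Hamming distance δ, and parameters ρ ∈ [0,1], ℓ ≥ 1 satisfying ℓ < (1−ρ)²/(1−δ), the code C is (ρ, ℓ, L)-list-recoverable with L = ℓ / ((1−ρ)² − (1−δ)ℓ) (the Johnson bound for list recovery): for any lists S_1,...,S_n each of size at most ℓ, at most L codewords c satisfy |{i : c_i ∉ S_i}| ≤ ρn. -/
/-- Johnson bound for list recovery: Let `C ⊆ F^n` have relative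
Hamming distance `δ` (every pair of distinct codewords is at Hamming distance at
least `δn`).  If `ρ ∈ [0,1]` and `ℓ ≥ 1` satisfy `ℓ < (1−ρ)²/(1−δ)`, then `C` is
`(ρ, ℓ, L)`-list-recoverable with `L = ℓ / ((1−ρ)² − (1−δ)ℓ)`: for any lists
`S_1,…,S_n` each of size at most `ℓ`, at most `L` codewords `c` satisfy
`|{i : c i ∉ S i}| ≤ ρn`. -/
theorem johnson_bound_list_recovery {F : Type*} [DecidableEq F] {n : ℕ} (hn : 0 < n)
    (C : Finset (Fin n → F)) (δ ρ : ℝ)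
    (hδ0 : 0 ≤ δ) (hδ1 : δ < 1) (hρ : ρ ∈ Set.Icc (0 : ℝ) 1)
    (hdist : ∀ c ∈ C, ∀ c' ∈ C, c ≠ c' → δ * n ≤ (hammingDist c c' : ℝ))
    (ℓ : ℕ) (hℓ1 : 1 ≤ ℓ) (hℓ : (ℓ : ℝ) < (1 - ρ) ^ 2 / (1 - δ))
    (L : ℝ) (hL : L = (ℓ : ℝ) / ((1 - ρ) ^ 2 - (1 - δ) * ℓ)) :
    ∀ S : Fin n → Finset F, (∀ i, (S i).card ≤ ℓ) →
      ((C.filter (fun c =>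
        ((Finset.univ.filter (fun i => c i ∉ S i)).card : ℝ) ≤ ρ * n)).card : ℝ) ≤ L := by
  intro S hS
  obtain ⟨hρ0, hρ1⟩ := hρ
  have hδ' : (0:ℝ) < 1 - δ := by linarith
  have hℓδ : (ℓ : ℝ) * (1 - δ) < (1 - ρ) ^ 2 := by
    rw [lt_div_iff₀ hδ'] at hℓ; exact hℓ
  have hD : (0:ℝ) < (1 - ρ) ^ 2 - (1 - δ) * ℓ := by nlinarith
  set A := C.filter (fun c =>
      ((Finset.univ.filter (fun i => c i ∉ S i)).card : ℝ) ≤ ρ * n) with hA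
  rcases Nat.eq_zero_or_pos A.card with h0 | hpos
  · rw [h0, hL]
    push_cast
    positivity
  -- notation
  set m : ℝ := (A.card : ℝ) with hm
  have hm1 : (1:ℝ) ≤ m := by rw [hm]; exact_mod_cast hpos
  have hn1 : (1:ℝ) ≤ n := by exact_mod_cast hn
  -- the agreement count per column
  set a : Fin n → ℝ := fun i => ((A.filter fun c => c i ∈ S i).card : ℝ) with ha
  -- fiber counts
  set na : Fin n → F → ℝ := fun i α => ((A.filter fun c => c i = α).card : ℝ) with hna
  -- Step A : a i = ∑ α ∈ S i, na i α
  have stepA : ∀ i, a i = ∑ α ∈ S i, na i α := by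
    intro i
    have h1 : (A.filter fun c => c i ∈ S i).card
        = ∑ α ∈ S i, ((A.filter fun c => c i ∈ S i).filter fun c => c i = α).card := by
      apply Finset.card_eq_sum_card_fiberwise
      intro c hc
      exact (Finset.mem_filter.1 hc).2
    have h2 : ∀ α ∈ S i, ((A.filter fun c => c i ∈ S i).filter fun c => c i = α)
        = A.filter fun c => c i = α := by
      intro α hα
      rw [Finset.filter_filter]
      apply Finset.filter_congr
      intro c _
      constructor
      · rintro ⟨_, h⟩; exact h
      · rintro h; exact ⟨h ▸ hα, h⟩
    show ((A.filter fun c => c i ∈ S i).card : ℝ)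
        = ∑ α ∈ S i, ((A.filter fun c => c i = α).card : ℝ)
    rw [h1, Nat.cast_sum]
    exact Finset.sum_congr rfl fun α hα => by rw [h2 α hα]
  -- Step B : ∑ i, a i ≥ m * (1-ρ) * n
  have stepB : m * ((1 - ρ) * n) ≤ ∑ i, a i := by
    have hswap : ∑ i, a i
        = ∑ c ∈ A, ((Finset.univ.filter fun i => c i ∈ S i).card : ℝ) := by
      show ∑ i : Fin n, ((A.filter fun c => c i ∈ S i).card : ℝ) = _
      simp_rw [Finset.card_filter]
      push_cast
      exact Finset.sum_comm
    rw [hswap]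
    have hub : ∀ c ∈ A, (1 - ρ) * n ≤ ((Finset.univ.filter fun i => c i ∈ S i).card : ℝ) := by
      intro c hc
      have hρn : ((Finset.univ.filter (fun i => c i ∉ S i)).card : ℝ) ≤ ρ * n :=
        (Finset.mem_filter.1 hc).2
      have hsplit : (Finset.univ.filter fun i => c i ∈ S i).card
          + (Finset.univ.filter (fun i => c i ∉ S i)).card = n := by
        have := Finset.card_filter_add_card_filter_not
          (s := (Finset.univ : Finset (Fin n))) (p := fun i => c i ∈ S i)
        simpa using this
      have hcast : ((Finset.univ.filter fun i => c i ∈ S i).card : ℝ)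
          = n - ((Finset.univ.filter (fun i => c i ∉ S i)).card : ℝ) := by
        have := congrArg (fun k : ℕ => (k : ℝ)) hsplit
        push_cast at this
        linarith
      rw [hcast]
      linarith
    calc m * ((1 - ρ) * n) = ∑ _c ∈ A, (1 - ρ) * n := by
          rw [Finset.sum_const, nsmul_eq_mul, hm]
      _ ≤ _ := Finset.sum_le_sum hub
  -- Step C : ∑ α ∈ S i, (na i α)^2 ≤ pair agreements
  have stepC : ∀ i, ∑ α ∈ S i, (na i α) ^ 2
      ≤ ∑ c ∈ A, ∑ c' ∈ A, (if c i = c' i then (1:ℝ) else 0) := by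
    intro i
    have hexp : ∀ α, na i α = ∑ c ∈ A, (if c i = α then (1:ℝ) else 0) := by
      intro α
      show ((A.filter fun c => c i = α).card : ℝ) = _
      rw [Finset.card_filter]
      push_cast
      rfl
    calc ∑ α ∈ S i, (na i α) ^ 2
        = ∑ c ∈ A, ∑ c' ∈ A, ∑ α ∈ S i,
            (if c i = α then (1:ℝ) else 0) * (if c' i = α then (1:ℝ) else 0) := by
          simp_rw [sq, hexp, Finset.sum_mul, Finset.mul_sum]
          rw [Finset.sum_comm]
          refine Finset.sum_congr rfl fun c _ => ?_
          rw [Finset.sum_comm]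
      _ ≤ ∑ c ∈ A, ∑ c' ∈ A, (if c i = c' i then (1:ℝ) else 0) := by
          refine Finset.sum_le_sum fun c _ => Finset.sum_le_sum fun c' _ => ?_
          have h1 : ∀ α, (if c i = α then (1:ℝ) else 0) * (if c' i = α then (1:ℝ) else 0)
              = if α = c i then (if c i = c' i then (1:ℝ) else 0) else 0 := by
            intro α
            rcases eq_or_ne α (c i) with hx | hx
            · subst hx
              simp [eq_comm]
            · rw [if_neg (Ne.symm hx), if_neg hx, zero_mul]
          simp_rw [h1]
          rw [Finset.sum_ite_eq' (S i) (c i)]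
          split_ifs <;> norm_num
  -- each pair-of-codewords agreement bound
  have pairbound : ∀ c ∈ A, ∑ c' ∈ A, ∑ i, (if c i = c' i then (1:ℝ) else 0)
      ≤ n + (m - 1) * ((1 - δ) * n) := by
    intro c hc
    have hcC : c ∈ C := (Finset.mem_filter.1 (hA ▸ hc)).1
    have hagree : ∀ c' : Fin n → F, ∑ i, (if c i = c' i then (1:ℝ) else 0)
        = (n : ℝ) - hammingDist c c' := by
      intro c'
      have hsplit : (Finset.univ.filter fun i => c i = c' i).card + hammingDist c c' = n := by
        have := Finset.card_filter_add_card_filter_not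
          (s := (Finset.univ : Finset (Fin n))) (p := fun i => c i = c' i)
        simpa [hammingDist] using this
      have h2 : ∑ i, (if c i = c' i then (1:ℝ) else 0)
          = ((Finset.univ.filter fun i => c i = c' i).card : ℝ) := by
        rw [Finset.card_filter]
        push_cast
        rfl
      rw [h2]
      have := congrArg (fun k : ℕ => (k : ℝ)) hsplit
      push_cast at this
      linarith
    have hdiag : ∑ i, (if c i = c i then (1:ℝ) else 0) = n := by simp
    rw [← Finset.add_sum_erase _ _ hc, hdiag]
    have herase : ∑ c' ∈ A.erase c, ∑ i, (if c i = c' i then (1:ℝ) else 0)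
        ≤ (m - 1) * ((1 - δ) * n) := by
      have hcard : ((A.erase c).card : ℝ) = m - 1 := by
        rw [Finset.card_erase_of_mem hc, hm]
        have h1 : 1 ≤ A.card := hpos
        push_cast [Nat.cast_sub h1]
        ring
      calc ∑ c' ∈ A.erase c, ∑ i, (if c i = c' i then (1:ℝ) else 0)
          ≤ ∑ _c' ∈ A.erase c, (1 - δ) * n := by
            refine Finset.sum_le_sum fun c' hc' => ?_
            have hc'A : c' ∈ A := Finset.mem_of_mem_erase hc'
            have hc'C : c' ∈ C := (Finset.mem_filter.1 (hA ▸ hc'A)).1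
            have hne : c ≠ c' := fun h => (Finset.ne_of_mem_erase hc') h.symm
            have := hdist c hcC c' hc'C hne
            rw [hagree c']
            linarith
        _ = (m - 1) * ((1 - δ) * n) := by rw [Finset.sum_const, nsmul_eq_mul, hcard]
    linarith
  -- Cauchy-Schwarz over columns and over symbols
  have cs1 : (∑ i, a i) ^ 2 ≤ n * ∑ i, (a i) ^ 2 := by
    have := sq_sum_le_card_mul_sum_sq (s := (Finset.univ : Finset (Fin n))) (f := a)
    simpa using this
  have cs2 : ∀ i, (a i) ^ 2 ≤ (ℓ : ℝ) * ∑ α ∈ S i, (na i α) ^ 2 := by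
    intro i
    have h1 : (a i) ^ 2 ≤ ((S i).card : ℝ) * ∑ α ∈ S i, (na i α) ^ 2 := by
      rw [stepA i]
      exact sq_sum_le_card_mul_sum_sq
    refine h1.trans ?_
    have hcard : ((S i).card : ℝ) ≤ (ℓ : ℝ) := by exact_mod_cast hS i
    have hnn : 0 ≤ ∑ α ∈ S i, (na i α) ^ 2 := Finset.sum_nonneg fun α _ => sq_nonneg _
    exact mul_le_mul_of_nonneg_right hcard hnn
  -- combine
  have key : (m * ((1 - ρ) * n)) ^ 2
      ≤ (n : ℝ) * ℓ * (m * (n + (m - 1) * ((1 - δ) * n))) := by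
    have hB0 : 0 ≤ m * ((1 - ρ) * n) := by
      have h : (0:ℝ) ≤ 1 - ρ := by linarith
      have h2 : (0:ℝ) ≤ m := by linarith
      positivity
    have e1 : (m * ((1 - ρ) * n)) ^ 2 ≤ (∑ i, a i) ^ 2 := pow_le_pow_left₀ hB0 stepB 2
    have e2 : (∑ i, (a i) ^ 2) ≤ (ℓ : ℝ) * ∑ i, ∑ α ∈ S i, (na i α) ^ 2 := by
      rw [Finset.mul_sum]
      exact Finset.sum_le_sum fun i _ => cs2 i
    have e3 : ∑ i, ∑ α ∈ S i, (na i α) ^ 2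
        ≤ ∑ c ∈ A, ∑ c' ∈ A, ∑ i, (if c i = c' i then (1:ℝ) else 0) := by
      calc ∑ i, ∑ α ∈ S i, (na i α) ^ 2
          ≤ ∑ i, ∑ c ∈ A, ∑ c' ∈ A, (if c i = c' i then (1:ℝ) else 0) :=
            Finset.sum_le_sum fun i _ => stepC i
        _ = ∑ c ∈ A, ∑ c' ∈ A, ∑ i, (if c i = c' i then (1:ℝ) else 0) := by
            rw [Finset.sum_comm]
            exact Finset.sum_congr rfl fun c _ => Finset.sum_comm
    have e4 : ∑ c ∈ A, ∑ c' ∈ A, ∑ i, (if c i = c' i then (1:ℝ) else 0)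
        ≤ m * (n + (m - 1) * ((1 - δ) * n)) := by
      calc _ ≤ ∑ _c ∈ A, ((n : ℝ) + (m - 1) * ((1 - δ) * n)) :=
            Finset.sum_le_sum pairbound
        _ = m * (n + (m - 1) * ((1 - δ) * n)) := by
            rw [Finset.sum_const, nsmul_eq_mul, hm]
    have hℓ0 : (0:ℝ) ≤ (ℓ:ℝ) := by positivity
    calc (m * ((1 - ρ) * n)) ^ 2 ≤ (∑ i, a i) ^ 2 := e1
      _ ≤ n * ∑ i, (a i) ^ 2 := cs1
      _ ≤ n * ((ℓ : ℝ) * ∑ i, ∑ α ∈ S i, (na i α) ^ 2) := by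
          apply mul_le_mul_of_nonneg_left e2 (by positivity)
      _ ≤ n * ((ℓ : ℝ) * (m * (n + (m - 1) * ((1 - δ) * n)))) := by
          apply mul_le_mul_of_nonneg_left _ (by positivity : (0:ℝ) ≤ (n:ℝ))
          exact mul_le_mul_of_nonneg_left (e3.trans e4) hℓ0
      _ = (n : ℝ) * ℓ * (m * (n + (m - 1) * ((1 - δ) * n))) := by ring
  -- final algebra
  have hmpos : (0:ℝ) < m := by linarith
  have hnpos : (0:ℝ) < (n:ℝ) := by linarith
  have h1 : m * (1 - ρ) ^ 2 ≤ (ℓ : ℝ) * (1 + (m - 1) * (1 - δ)) := by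
    have hfac : (0:ℝ) < m * ((n:ℝ) * (n:ℝ)) := by positivity
    apply le_of_mul_le_mul_left _ hfac
    nlinarith [key]
  rw [hL, le_div_iff₀ hD]
  nlinarith [h1, hm1, hδ', hδ0]
end
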